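/- arXiv:2106.15175 — 5 statements merged into one kernel-verified Lean document; each statement's English description precedes it below -/
import Mathlib

section
/- For every ε > 0 there exists t₀ ∈ ℕ such that for every integer t ≥ t₀ there exist a finite simple graph F that is a forest (contains no cycles) and a partition 𝒫 of the vertex set of F such that: (i) every block of 𝒫 has size at least t; (ii) for every block B of 𝒫, the number of edges of F with exactly one endpoint in B is at most (1/4 + ε)·t·|B|; and (iii) there is no independent transversal of 𝒫 in F. -/
/-!
Fix thresholds `0 = b 0 ≤ b 1 ≤ ⋯ ≤ b L = t`. Call a sequence `(c₀, …, c_{n-1})` over `Fin t`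
active if `b k ≤ c_k` for all `k`. There is one block per active sequence `l`, consisting of its
`t` one-step extensions `c :: l`, and the extension `c :: l` is joined to its parent vertex
(the extension of `l.tail` by `l.head`) exactly when it fails to be active, i.e. `c < b n` with
`n = |l|`. An independent transversal is then forced to choose an active vertex in the root block
(as `b 0 = 0`), hence in the block below it, and so on, producing an active sequence of length
`L + 1`, which is impossible as `b L = t`.

The block of a sequence of length `n` sends at most `b n` edges up and `(t - b n) * b (n + 1)` down.
With `b n = min t (n * s)` and `s ≈ ε t / 2` we have `b (n + 1) ≤ b n + s`, so this is at most
`t + t * s + (t - b n) * b n ≤ t + t * s + t² / 4 ≤ (1/4 + ε) t²`. Every vertex has at most one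
neighbour of smaller depth, so the graph is a forest.
-/

theorem SimpleGraph.isAcyclic_of_height {V : Type*} {G : SimpleGraph V} (h : V → ℕ)
    (hne : ∀ ⦃v w⦄, G.Adj v w → h v ≠ h w)
    (hlow : ∀ ⦃u v w⦄, G.Adj u v → G.Adj u w → h v < h u → h w < h u → v = w) :
    G.IsAcyclic := by
  classical
  intro u c hc
  obtain ⟨m, hm, hmax⟩ := c.support.toFinset.exists_max_image h ⟨u, by simp⟩
  rw [List.mem_toFinset] at hm
  set c' := c.rotate m hm
  have hc' : c'.IsCycle := hc.rotate hm
  have hlt (i : ℕ) (hadj : G.Adj m (c'.getVert i)) : h (c'.getVert i) < h m := by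
    refine (hmax _ ?_).lt_of_ne (hne hadj).symm
    exact List.mem_toFinset.2 ((c.mem_support_rotate_iff m hm).1 (c'.getVert_mem_support i))
  have hsnd := c'.adj_snd hc'.not_nil
  have hpen := (c'.adj_penultimate hc'.not_nil).symm
  exact hc'.snd_ne_penultimate (hlow hsnd hpen (hlt _ hsnd) (hlt _ hpen))

theorem SimpleGraph.ncard_boundary_le_sum {V ι β : Type*} [Finite V] [Fintype β]
    (G : SimpleGraph V) (f : V → ι) (i : ι) (g : β → V) (hg : ∀ v, f v = i → ∃ c, g c = v) :
    {e ∈ G.edgeSet | ∃ v w, e = s(v, w) ∧ f v = i ∧ f w ≠ i}.ncard ≤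
      ∑ c, {w | G.Adj (g c) w ∧ f w ≠ i}.ncard := by
  calc _ ≤ (⋃ c, (fun w => s(g c, w)) '' {w | G.Adj (g c) w ∧ f w ≠ i}).ncard := by
        refine Set.ncard_le_ncard ?_ (Set.toFinite _)
        rintro _ ⟨hadj, v, w, rfl, hv, hw⟩
        obtain ⟨c, rfl⟩ := hg v hv
        exact Set.mem_iUnion.2 ⟨c, w, ⟨hadj, hw⟩, rfl⟩
    _ ≤ ∑ c, ((fun w => s(g c, w)) '' {w | G.Adj (g c) w ∧ f w ≠ i}).ncard :=
        Set.ncard_iUnion_le_of_fintype _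
    _ ≤ _ := Finset.sum_le_sum fun c _ => Set.ncard_image_le (Set.toFinite _)

theorem Fin.sum_ite_val_lt_le {t x : ℕ} (hx : x ≤ t) (y : ℕ) :
    ∑ c : Fin t, (if (c : ℕ) < x then 1 else y) ≤ x + (t - x) * y := by
  classical
  rw [Finset.sum_ite, Finset.sum_const, Finset.sum_const, smul_eq_mul, smul_eq_mul, mul_one,
    Fin.card_filter_val_lt, Finset.filter_not,
    Finset.card_sdiff_of_subset (Finset.filter_subset _ _), Fin.card_filter_val_lt,
    Finset.card_univ, Fintype.card_fin, min_eq_right hx]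

theorem Set.ncard_preimage_snd_singleton {α β : Type*} [Fintype α] (i : β) :
    (Prod.snd ⁻¹' {i} : Set (α × β)).ncard = Fintype.card α := by
  have : (Prod.snd ⁻¹' {i} : Set (α × β)) = Set.range (·, i) := by ext ⟨a, b⟩; simp [eq_comm]
  rw [this, Set.ncard_range_of_injective (Prod.mk_left_injective i), Nat.card_eq_fintype_card]

theorem cast_add_sub_mul_le {ε : ℝ} {t s x y : ℕ} (hx : x ≤ t) (hy : y ≤ x + s)
    (hs : (1 + s : ℝ) ≤ ε * t) : ((x + (t - x) * y : ℕ) : ℝ) ≤ (1 / 4 + ε) * t * t := by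
  obtain ⟨d, rfl⟩ := Nat.exists_eq_add_of_le hx
  have hnat : 4 * (x + d * y) ≤ (x + d) * (x + d) + 4 * (x + d) * (1 + s) := by
    nlinarith [Nat.mul_le_mul_left d hy, sq_nonneg ((x : ℤ) - d)]
  have hreal : (4 * (x + d * y) : ℝ) ≤ (x + d) * (x + d) + 4 * (x + d) * (1 + s) := by
    exact_mod_cast hnat
  rw [Nat.add_sub_cancel_left]
  push_cast at hs ⊢
  nlinarith [mul_le_mul_of_nonneg_left hs (by positivity : (0 : ℝ) ≤ x + d)]

theorem one_add_div_ceil_le {ε : ℝ} (hε : 0 < ε) {t : ℕ} (ht : ⌈2 / ε⌉₊ ≤ t) :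
    (1 + (t / ⌈2 / ε⌉₊ : ℕ) : ℝ) ≤ ε * t := by
  have hm : 2 / ε ≤ ⌈2 / ε⌉₊ := Nat.le_ceil _
  have hm0 : (0 : ℝ) < ⌈2 / ε⌉₊ := (div_pos two_pos hε).trans_le hm
  have htm : 2 / ε ≤ t := hm.trans (by exact_mod_cast ht)
  have hdiv : ((t / ⌈2 / ε⌉₊ : ℕ) : ℝ) ≤ ε * t / 2 := by
    refine Nat.cast_div_le.trans ?_
    rw [div_le_iff₀ hm0]
    rw [div_le_iff₀ hε] at hm
    nlinarith [(Nat.cast_nonneg t : (0 : ℝ) ≤ t)]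
  rw [div_le_iff₀ hε] at htm
  linarith

namespace ThresholdForest

variable {t : ℕ} (b : ℕ → ℕ)

def IsActiveSeq : List (Fin t) → Prop
  | [] => True
  | c :: l => IsActiveSeq l ∧ b l.length ≤ c

variable (t) in
def ActiveSeq : Type := {l : List (Fin t) // IsActiveSeq b l}

variable (t) in
/-- The vertex `(c, l)` is the sequence `c :: l`, stored newest entry first, in the block `l`. -/
def graph : SimpleGraph (Fin t × ActiveSeq t b) :=
  SimpleGraph.fromRel fun v w => w.2.1 = v.1 :: v.2.1 ∧ (w.1 : ℕ) < b w.2.1.length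

variable {b}

theorem graph_adj_iff {v w : Fin t × ActiveSeq t b} :
    (graph t b).Adj v w ↔ v ≠ w ∧ ((w.2.1 = v.1 :: v.2.1 ∧ (w.1 : ℕ) < b w.2.1.length) ∨
      (v.2.1 = w.1 :: w.2.1 ∧ (v.1 : ℕ) < b v.2.1.length)) :=
  SimpleGraph.fromRel_adj _ _ _

theorem eq_cons_of_graph_adj {v w : Fin t × ActiveSeq t b} (h : (graph t b).Adj v w)
    (hlt : w.2.1.length < v.2.1.length) : v.2.1 = w.1 :: w.2.1 ∧ (v.1 : ℕ) < b v.2.1.length := by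
  rcases (graph_adj_iff.1 h).2 with h' | h'
  · have := congrArg List.length h'.1
    rw [List.length_cons] at this
    omega
  · exact h'

theorem graph_isAcyclic : (graph t b).IsAcyclic := by
  refine SimpleGraph.isAcyclic_of_height (fun v => v.2.1.length) (fun v w h => ?_)
    (fun u v w huv huw hv hw => ?_)
  · rcases (graph_adj_iff.1 h).2 with h' | h' <;>
    · have := congrArg List.length h'.1
      rw [List.length_cons] at this
      omega
  · have h := (eq_cons_of_graph_adj huv hv).1.symm.trans (eq_cons_of_graph_adj huw hw).1
    rw [List.cons.injEq] at h
    exact Prod.ext h.1 (Subtype.ext h.2)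

theorem IsActiveSeq.length_le {L : ℕ} (hL : t ≤ b L) :
    ∀ {l : List (Fin t)}, IsActiveSeq b l → l.length ≤ L
  | [], _ => Nat.zero_le _
  | c :: l, ⟨hl, hc⟩ => by
    have := hl.length_le hL
    have : l.length ≠ L := fun h => by have := c.isLt; rw [h] at hc; omega
    simp only [List.length_cons]
    omega

theorem finite_activeSeq {L : ℕ} (hL : t ≤ b L) : Finite (ActiveSeq t b) :=
  ((List.finite_length_le (Fin t) L).subset fun _ hl => IsActiveSeq.length_le hL hl).to_subtype

theorem ncard_adj_outside_block_le (c : Fin t) (l : ActiveSeq t b) :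
    {w | (graph t b).Adj (c, l) w ∧ w.2 ≠ l}.ncard ≤
      if (c : ℕ) < b l.1.length then 1 else b (l.1.length + 1) := by
  split_ifs with hc
  · have hparent : ∀ w ∈ {w | (graph t b).Adj (c, l) w ∧ w.2 ≠ l}, l.1 = w.1 :: w.2.1 := by
      rintro w ⟨hadj, -⟩
      rcases (graph_adj_iff.1 hadj).2 with ⟨hw, -⟩ | ⟨hl, -⟩
      · have := w.2.2
        rw [hw] at this
        exact absurd this.2 (not_le.2 hc)
      · exact hl
    have hsub : Set.Subsingleton {w | (graph t b).Adj (c, l) w ∧ w.2 ≠ l} := fun w hw w' hw' => by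
      have h := (hparent w hw).symm.trans (hparent w' hw')
      rw [List.cons.injEq] at h
      exact Prod.ext h.1 (Subtype.ext h.2)
    exact (Set.ncard_le_one hsub.finite).2 hsub
  · have hchild : ∀ w ∈ {w | (graph t b).Adj (c, l) w ∧ w.2 ≠ l},
        w.2.1 = c :: l.1 ∧ (w.1 : ℕ) < b (l.1.length + 1) := by
      rintro w ⟨hadj, -⟩
      rcases (graph_adj_iff.1 hadj).2 with ⟨hw, hlt⟩ | ⟨-, hlt⟩
      · rw [hw, List.length_cons] at hlt
        exact ⟨hw, hlt⟩
      · exact absurd hlt hc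
    calc _ ≤ (Finset.range (b (l.1.length + 1)) : Set ℕ).ncard := by
          refine Set.ncard_le_ncard_of_injOn (fun w => (w.1 : ℕ))
            (fun w hw => by simpa using (hchild w hw).2) (fun w hw w' hw' h => ?_)
            (Finset.finite_toSet _)
          exact Prod.ext (Fin.ext h) (Subtype.ext ((hchild w hw).1.trans (hchild w' hw').1.symm))
      _ = _ := by rw [Set.ncard_coe_finset, Finset.card_range]

theorem ncard_boundary_le [Finite (ActiveSeq t b)] (hb : ∀ n, b n ≤ t) (l : ActiveSeq t b) :
    {e ∈ (graph t b).edgeSet | ∃ v w, e = s(v, w) ∧ v.2 = l ∧ w.2 ≠ l}.ncard ≤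
      b l.1.length + (t - b l.1.length) * b (l.1.length + 1) :=
  calc _ ≤ ∑ c : Fin t, {w | (graph t b).Adj (c, l) w ∧ w.2 ≠ l}.ncard :=
        SimpleGraph.ncard_boundary_le_sum _ Prod.snd l (·, l) fun v hv =>
          ⟨v.1, Prod.ext rfl hv.symm⟩
    _ ≤ ∑ c : Fin t, if (c : ℕ) < b l.1.length then 1 else b (l.1.length + 1) :=
        Finset.sum_le_sum fun c _ => ncard_adj_outside_block_le c l
    _ ≤ _ := Fin.sum_ite_val_lt_le (hb _) _

theorem not_exists_independentTransversal (hb0 : b 0 = 0) {L : ℕ} (hL : t ≤ b L) :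
    ¬∃ T : ActiveSeq t b → Fin t × ActiveSeq t b,
      (∀ i, (T i).2 = i) ∧ ∀ i j, ¬(graph t b).Adj (T i) (T j) := by
  rintro ⟨T, hT, hind⟩
  have hactive : ∀ k, ∃ l : ActiveSeq t b, l.1.length = k ∧ IsActiveSeq b ((T l).1 :: l.1) := by
    intro k
    induction k with
    | zero => exact ⟨⟨[], trivial⟩, rfl, trivial, by simp [hb0]⟩
    | succ k ih =>
      obtain ⟨l, hlen, hl⟩ := ih
      set l' : ActiveSeq t b := ⟨(T l).1 :: l.1, hl⟩
      refine ⟨l', by simp [l', hlen], hl, not_lt.1 fun hlt => hind l l' ?_⟩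
      refine graph_adj_iff.2 ⟨fun h => ?_, Or.inl ⟨?_, ?_⟩⟩
      · have hll' : l = l' := by rw [← hT l, ← hT l', h]
        have := congrArg (fun l => l.1.length) hll'
        simp [l'] at this
      · rw [hT, hT]
      · rwa [hT]
  obtain ⟨l, hlen, hl⟩ := hactive (L + 1)
  have := hl.length_le hL
  rw [List.length_cons] at this
  omega

end ThresholdForest

open ThresholdForest in
/-- For every `ε > 0` there is `t₀` such that for all `t ≥ t₀` there is a forest `F`
with a vertex partition (given by the fibers of `f : V → ι`) that is `t`-thick,
has block degree at most `(1/4 + ε) * t * |B|` for every block `B`, and admits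
no independent transversal. -/
theorem stmt_0 (ε : ℝ) (hε : 0 < ε) :
    ∃ t₀ : ℕ, ∀ t : ℕ, t₀ ≤ t →
      ∃ (V ι : Type) (_ : Fintype V) (_ : Fintype ι) (F : SimpleGraph V) (f : V → ι),
        F.IsAcyclic ∧
        (∀ i : ι, t ≤ (f ⁻¹' {i}).ncard) ∧
        (∀ i : ι,
          ({e ∈ F.edgeSet | ∃ v w, e = s(v, w) ∧ f v = i ∧ f w ≠ i}.ncard : ℝ) ≤
            (1 / 4 + ε) * t * ((f ⁻¹' {i}).ncard : ℝ)) ∧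
        ¬∃ T : ι → V, (∀ i, f (T i) = i) ∧ ∀ i j, ¬F.Adj (T i) (T j) := by
  refine ⟨⌈2 / ε⌉₊, fun t ht => ?_⟩
  set s := t / ⌈2 / ε⌉₊
  have hs : 1 ≤ s := (Nat.le_div_iff_mul_le (Nat.ceil_pos.2 (by positivity))).2 (by rwa [one_mul])
  set b : ℕ → ℕ := fun n => min t (n * s)
  have hbt : t ≤ b t := le_min le_rfl (Nat.le_mul_of_pos_right t hs)
  have hb_succ (n : ℕ) : b (n + 1) ≤ b n + s := by
    simp only [b, add_mul, one_mul]
    omega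
  have : Finite (ActiveSeq t b) := finite_activeSeq hbt
  let _ : Fintype (ActiveSeq t b) := Fintype.ofFinite _
  refine ⟨Fin t × ActiveSeq t b, ActiveSeq t b, inferInstance, inferInstance, graph t b, Prod.snd,
    graph_isAcyclic, fun l => ?_, fun l => ?_, not_exists_independentTransversal (by simp [b]) hbt⟩
  · rw [Set.ncard_preimage_snd_singleton, Fintype.card_fin]
  · rw [Set.ncard_preimage_snd_singleton, Fintype.card_fin]
    exact (Nat.cast_le.2 (ncard_boundary_le (fun n => min_le_left _ _) l)).trans
      (cast_add_sub_mul_le (min_le_left _ _) (hb_succ _) (one_add_div_ceil_le hε ht))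
end

section
/- Fix an integer r ≥ 2 and a real ε > 0. There exists a constant C = C(ε, r) such that for all sufficiently large integers t and every integer n > t^C, there exist an r-uniform hypergraph G and a partition 𝒫 = {V₁, …, V_n} of its vertex set into n blocks such that: (i) every block V_i has size at least t; (ii) for each i ∈ {1, …, n}, the number of edges of G intersecting V_i is at most ((r−1)^{r−1}/r^r + ε)·t^r; and (iii) there is no independent transversal of 𝒫 in G. -/
/-!
Arrange blocks as the nodes of a rooted tree of depth `L` in which every node has one child for
each pair `(u, i)` of a vertex `u` of its block and an index `i < r - 1`, and set thresholds
`a m = t - m d` with `L d ≥ t`. For a node `s` at depth `m`, a vertex `u < a m` of its block, and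
vertices `w i ≥ a (m + 1)` in the blocks of its children `(u, i)`, the `r` vertices
`u, w 0, …, w (r - 2)` form an edge. A transversal `T` picks `T root < a 0`; if `T s < a m`, then
either the edge through `T s` and the `T`-values of the children `(T s, i)` lies in `T`, or some
child has `T`-value `< a (m + 1)`. Since `a L = 0` the descent must stop, so `T` contains an edge.

A block at depth `m` lies in at most `a m * (t - a (m + 1)) ^ (r - 1) ≤ (t - x) (x + d) ^ (r - 1)`
edges as a parent (`x = m d`), which AM-GM bounds by `(r-1)^(r-1)/r^r (t + d)^r`, plus `t^(r-1)`
edges as a child. Taking `d = o(t)` gives the degree bound, and the tree has fewer than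
`(t (r-1) + 1)^L ≤ t^(2L)` nodes, so it fits injectively into `n > t^(2L)` blocks; the remaining
blocks carry no edges.
-/

open Finset Filter

theorem sub_mul_pow_le (k : ℕ) {x T : ℝ} (hx : 0 ≤ x) (hxT : x ≤ T) :
    (k + 1) ^ (k + 1) * ((T - x) * x ^ k) ≤ k ^ k * T ^ (k + 1) := by
  rcases Nat.eq_zero_or_pos k with rfl | hk
  · simpa using hx
  obtain ⟨j, rfl⟩ : ∃ j, k = j + 1 := ⟨k - 1, by omega⟩
  -- Tangent line of `z ↦ z ^ k` at `y`; `y = z` exactly at the maximiser `x = k T / (k + 1)`.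
  set y : ℝ := (j + 2) * x
  set z : ℝ := (j + 1) * T
  have hy : 0 ≤ y := by positivity
  have hz : 0 ≤ z := by have : 0 ≤ T := hx.trans hxT; positivity
  have tangent := pow_add_mul_le_add_pow (n := j + 1) hy (b := z - y) (by linarith)
  rw [add_sub_cancel, add_tsub_cancel_right] at tangent
  have key : y ^ (j + 1) * z + (j + 1) * y ^ (j + 1) * (z - y) ≤ z ^ (j + 1) * z := by
    push_cast at tangent
    have hsq : 0 ≤ (j + 1) * y ^ j * (z - y) ^ 2 := by positivity
    linear_combination mul_le_mul_of_nonneg_right tangent hz + hsq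
  refine le_of_mul_le_mul_right ?_ (by positivity : (0 : ℝ) < j + 1)
  calc ((j + 1 : ℕ) + 1 : ℝ) ^ (j + 1 + 1) * ((T - x) * x ^ (j + 1)) * (j + 1)
      = y ^ (j + 1) * z + (j + 1) * y ^ (j + 1) * (z - y) := by
        simp only [y, z, mul_pow]; push_cast; ring
    _ ≤ z ^ (j + 1) * z := key
    _ = _ := by simp only [z, mul_pow]; push_cast; ring

theorem add_pow_le_pow_add_mul (n : ℕ) {t d : ℝ} (ht : 0 ≤ t) (hd : 0 ≤ d) :
    (t + d) ^ n ≤ t ^ n + n * d * (t + d) ^ (n - 1) := by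
  have := pow_add_mul_le_add_pow (n := n) (a := t + d) (b := -d) (by positivity) (by linarith)
  rw [add_neg_cancel_right] at this
  linarith

theorem sub_mul_add_pow_add_pow_le (k : ℕ) {ε t d x : ℝ} (hx : 0 ≤ x) (hxt : x ≤ t)
    (hd : 0 ≤ d) (hdt : d ≤ t) (hε : (k + 1) * 2 ^ k * d + 1 ≤ ε * t) :
    (t - x) * (x + d) ^ k + t ^ k ≤ (k ^ k / (k + 1) ^ (k + 1) + ε) * t ^ (k + 1) := by
  set K : ℝ := k ^ k / (k + 1) ^ (k + 1)
  have ht : 0 ≤ t := hx.trans hxt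
  have hK : K ≤ 1 := by
    rw [div_le_one (by positivity)]
    calc (k : ℝ) ^ k ≤ (k + 1) ^ k := by gcongr; linarith
      _ ≤ (k + 1) ^ (k + 1) := pow_le_pow_right₀ (by linarith) k.le_succ
  have hamgm : (t - x) * (x + d) ^ k ≤ K * (t + d) ^ (k + 1) := by
    rw [div_mul_eq_mul_div, le_div_iff₀ (by positivity), mul_comm]
    simpa using sub_mul_pow_le k (by positivity : 0 ≤ x + d) (by linarith : x + d ≤ t + d)
  have hgrowth : (t + d) ^ (k + 1) ≤ t ^ (k + 1) + (k + 1) * 2 ^ k * d * t ^ k := by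
    have h2t : (t + d) ^ k ≤ 2 ^ k * t ^ k := by
      rw [← mul_pow]; gcongr; linarith
    have := add_pow_le_pow_add_mul (k + 1) ht hd
    push_cast at this
    nlinarith [mul_le_mul_of_nonneg_left h2t (by positivity : (0:ℝ) ≤ (k + 1) * d)]
  calc (t - x) * (x + d) ^ k + t ^ k
      ≤ K * (t ^ (k + 1) + (k + 1) * 2 ^ k * d * t ^ k) + t ^ k := by
        linarith [mul_le_mul_of_nonneg_left hgrowth (by positivity : 0 ≤ K)]
    _ ≤ K * t ^ (k + 1) + ((k + 1) * 2 ^ k * d + 1) * t ^ k := by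
        have : 0 ≤ (k + 1) * 2 ^ k * d * t ^ k := by positivity
        nlinarith
    _ ≤ K * t ^ (k + 1) + ε * t * t ^ k := by gcongr
    _ = (K + ε) * t ^ (k + 1) := by ring

theorem exists_depth (c : ℝ) (hc : 0 ≤ c) {ε : ℝ} (hε : 0 < ε) :
    ∃ L : ℕ, 0 < L ∧ ∀ᶠ t : ℕ in atTop,
      t / L + 1 ≤ t ∧ c * ((t / L + 1 : ℕ) : ℝ) + 1 ≤ ε * t := by
  obtain ⟨L, hL⟩ := exists_nat_ge (2 * c / ε)
  refine ⟨L + 2, by omega, ?_⟩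
  filter_upwards [eventually_ge_atTop 2,
    tendsto_natCast_atTop_atTop.eventually_ge_atTop (2 * (c + 1) / ε)] with t ht htε
  refine ⟨?_, ?_⟩
  · have := Nat.div_le_div_left (show 2 ≤ L + 2 by omega) (show 0 < 2 by norm_num) (a := t)
    omega
  · have hdiv : ((t / (L + 2) : ℕ) : ℝ) ≤ t / (L + 2) := by exact_mod_cast Nat.cast_div_le
    rw [div_le_iff₀ hε] at hL htε
    have : c * (t / (L + 2)) ≤ ε * t / 2 := by
      rw [mul_div_assoc', div_le_div_iff₀ (by positivity) (by norm_num)]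
      nlinarith [(Nat.cast_nonneg t : (0:ℝ) ≤ t)]
    push_cast
    nlinarith

theorem Fin.card_filter_le_val (t a : ℕ) : #{i : Fin t | a ≤ i.val} = t - a := by
  have := card_filter_add_card_filter_not (s := univ) (fun i : Fin t => i.val < a)
  simp only [Fin.card_filter_val_lt, not_lt, card_univ, Fintype.card_fin] at this
  omega

theorem exists_injOn_length_le (α ι : Type*) [Fintype α] [Fintype ι] (L : ℕ)
    (h : (Fintype.card α + 1) ^ L ≤ Fintype.card ι) :
    ∃ f : List α → ι, Set.InjOn f {s | s.length ≤ L} := by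
  obtain ⟨g⟩ : Nonempty ((Fin L → Option α) ↪ ι) :=
    Function.Embedding.nonempty_of_card_le (by simpa using h)
  refine ⟨fun s => g fun j => s[j.val]?, fun s hs s' hs' hss' => List.ext_getElem? fun j => ?_⟩
  by_cases hj : j < L
  · exact congrFun (g.injective hss') ⟨j, hj⟩
  · rw [List.getElem?_eq_none (by simp at hs; omega), List.getElem?_eq_none (by simp at hs'; omega)]

/-- `node` is the path from the root, recording at each step the vertex `u` of the current block
and the child index `i`; the edge joins `low` in the block of `node` with `high i` in the block of
the child `(low, i) :: node`. -/
structure TreeEdge (t k : ℕ) where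
  node : List (Fin t × Fin k)
  low : Fin t
  high : Fin k → Fin t

namespace TreeEdge

variable {ι : Type*} {t k d L : ℕ}

def IsAdmissible (d : ℕ) (p : TreeEdge t k) : Prop :=
  p.low < t - p.node.length * d ∧ ∀ i, t - (p.node.length + 1) * d ≤ p.high i

theorem IsAdmissible.length_lt {p : TreeEdge t k} (hp : p.IsAdmissible d) (hL : t ≤ L * d) :
    p.node.length < L :=
  Nat.lt_of_mul_lt_mul_right (a := d) (by have := hp.1; omega)

theorem finite_setOf_isAdmissible (hL : t ≤ L * d) :
    {p : TreeEdge t k | p.IsAdmissible d}.Finite := by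
  refine (((List.finite_length_lt _ L).prod (Set.finite_univ (α := Fin t × (Fin k → Fin t)))).image
    fun q => (⟨q.1, q.2.1, q.2.2⟩ : TreeEdge t k)).subset fun p hp => ?_
  exact ⟨(p.node, p.low, p.high), ⟨hp.length_lt hL, trivial⟩, rfl⟩

theorem ncard_isAdmissible_node_eq_le (s : List (Fin t × Fin k)) :
    {p : TreeEdge t k | p.IsAdmissible d ∧ p.node = s}.ncard ≤
      (t - s.length * d) * (t - (t - (s.length + 1) * d)) ^ k := by
  let F : Finset (Fin t × (Fin k → Fin t)) :=
    ({u | u.val < t - s.length * d} : Finset (Fin t)) ×ˢ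
      Fintype.piFinset fun _ => ({w | t - (s.length + 1) * d ≤ w.val} : Finset (Fin t))
  have hF : F.card = (t - s.length * d) * (t - (t - (s.length + 1) * d)) ^ k := by
    rw [card_product, Fintype.card_piFinset_const, Fin.card_filter_val_lt,
      Fin.card_filter_le_val, min_eq_right (Nat.sub_le _ _)]
  rw [← hF, ← Set.ncard_coe_finset]
  refine Set.ncard_le_ncard_of_injOn (fun p => (p.low, p.high)) ?_ ?_
  · rintro p ⟨hp, rfl⟩
    simpa [F, IsAdmissible] using hp
  · rintro ⟨s₁, u₁, w₁⟩ ⟨-, rfl⟩ ⟨s₂, u₂, w₂⟩ ⟨-, rfl⟩ h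
    simp_all

theorem ncard_isAdmissible_child_le (blk : List (Fin t × Fin k) → ι)
    (hblk : Set.InjOn blk {s | s.length ≤ L}) (hL : t ≤ L * d) (i₀ : ι) :
    {p : TreeEdge t k | p.IsAdmissible d ∧ ∃ i, blk ((p.low, i) :: p.node) = i₀}.ncard ≤
      t ^ k := by
  have hcard : (Set.univ : Set (Fin k → Fin t)).ncard = t ^ k := by simp
  rw [← hcard]
  refine Set.ncard_le_ncard_of_injOn TreeEdge.high (fun _ _ => Set.mem_univ _) ?_
  rintro ⟨s₁, u₁, w₁⟩ ⟨hp₁, i₁, h₁⟩ ⟨s₂, u₂, w₂⟩ ⟨hp₂, i₂, h₂⟩ (rfl : w₁ = w₂)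
  have := hblk (by simpa using hp₁.length_lt hL) (by simpa using hp₂.length_lt hL)
    (h₁.trans h₂.symm)
  simp_all

variable [DecidableEq ι] (blk : List (Fin t × Fin k) → ι)

def toFinset (p : TreeEdge t k) : Finset (ι × Fin t) :=
  insert (blk p.node, p.low) (univ.image fun i => (blk ((p.low, i) :: p.node), p.high i))

theorem card_toFinset (hblk : Set.InjOn blk {s | s.length ≤ L}) (hL : t ≤ L * d)
    {p : TreeEdge t k} (hp : p.IsAdmissible d) : (p.toFinset blk).card = k + 1 := by
  have hlen := hp.length_lt hL
  have hchild : ∀ i, ((p.low, i) :: p.node).length ≤ L := fun i => by simpa using hlen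
  rw [toFinset, card_insert_of_notMem, card_image_of_injective, card_univ, Fintype.card_fin]
  · intro i j hij
    simpa using hblk (hchild i) (hchild j) (congrArg Prod.fst hij)
  · simp only [mem_image, mem_univ, true_and, Prod.mk.injEq, not_exists, not_and]
    intro i hi _
    simpa using congrArg List.length (hblk (hchild i) (by simpa using hlen.le) hi)

end TreeEdge

section

open TreeEdge

variable {ι : Type*} [DecidableEq ι] {t k d L : ℕ}

def treeEdges (blk : List (Fin t × Fin k) → ι) (d : ℕ) : Set (Finset (ι × Fin t)) :=
  TreeEdge.toFinset blk '' {p | p.IsAdmissible d}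

theorem exists_deep_node (blk : List (Fin t × Fin k) → ι) (T : ι → ι × Fin t)
    (hT : ∀ i, (T i).1 = i) (hfree : ∀ e ∈ treeEdges blk d, ¬(e : Set (ι × Fin t)) ⊆ Set.range T) :
    ∀ m, ∃ s : List (Fin t × Fin k), s.length = m ∧ (T (blk s)).2 < t - m * d
  | 0 => ⟨[], rfl, by simp⟩
  | m + 1 => by
    obtain ⟨s, rfl, hs⟩ := exists_deep_node blk T hT hfree m
    set u := (T (blk s)).2
    by_contra! hdeep
    let p : TreeEdge t k := ⟨s, u, fun i => (T (blk ((u, i) :: s))).2⟩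
    refine hfree _ ⟨p, ⟨hs, fun i => hdeep _ (by simp)⟩, rfl⟩ fun v hv => ?_
    simp only [toFinset, coe_insert, coe_image, coe_univ, Set.image_univ, Set.mem_insert_iff,
      Set.mem_range] at hv
    rcases hv with rfl | ⟨i, rfl⟩
    · exact ⟨blk s, Prod.ext (hT _) rfl⟩
    · exact ⟨_, Prod.ext (hT _) rfl⟩

theorem exists_treeEdge_subset_range (blk : List (Fin t × Fin k) → ι) (hL : t ≤ L * d)
    (T : ι → ι × Fin t) (hT : ∀ i, (T i).1 = i) :
    ∃ e ∈ treeEdges blk d, (e : Set (ι × Fin t)) ⊆ Set.range T := by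
  by_contra! hfree
  obtain ⟨s, -, hs⟩ := exists_deep_node blk T hT hfree L
  omega

theorem ncard_treeEdges_meeting_le (blk : List (Fin t × Fin k) → ι)
    (hblk : Set.InjOn blk {s | s.length ≤ L}) (hL : t ≤ L * d) (i₀ : ι) :
    ∃ x ≤ t, {e ∈ treeEdges blk d | ∃ v ∈ e, v.1 = i₀}.ncard ≤ (t - x) * (x + d) ^ k + t ^ k := by
  set A := {p : TreeEdge t k | p.IsAdmissible d ∧ blk p.node = i₀}
  set B := {p : TreeEdge t k | p.IsAdmissible d ∧ ∃ i, blk ((p.low, i) :: p.node) = i₀}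
  have hfin := finite_setOf_isAdmissible (k := k) hL
  obtain ⟨s, hAs⟩ : ∃ s, A ⊆ {p | p.IsAdmissible d ∧ p.node = s} := by
    rcases A.eq_empty_or_nonempty with hA | ⟨p₀, hp₀⟩
    · exact ⟨[], hA ▸ Set.empty_subset _⟩
    refine ⟨p₀.node, fun p hp => ⟨hp.1, hblk ?_ ?_ (hp.2.trans hp₀.2.symm)⟩⟩
    · exact (hp.1.length_lt hL).le
    · exact (hp₀.1.length_lt hL).le
  have hsub : {e ∈ treeEdges blk d | ∃ v ∈ e, v.1 = i₀} ⊆ TreeEdge.toFinset blk '' (A ∪ B) := by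
    rintro _ ⟨⟨p, hp, rfl⟩, v, hv, rfl⟩
    refine ⟨p, ?_, rfl⟩
    simp only [toFinset, mem_insert, mem_image, mem_univ, true_and] at hv
    rcases hv with rfl | ⟨i, rfl⟩
    · exact Or.inl ⟨hp, rfl⟩
    · exact Or.inr ⟨hp, i, rfl⟩
  have hAB : (A ∪ B).Finite := hfin.subset (Set.union_subset (fun p hp => hp.1) fun p hp => hp.1)
  refine ⟨min (s.length * d) t, min_le_right _ _, ?_⟩
  calc {e ∈ treeEdges blk d | ∃ v ∈ e, v.1 = i₀}.ncard
      ≤ (A ∪ B).ncard := (Set.ncard_le_ncard hsub (hAB.image _)).trans (Set.ncard_image_le hAB)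
    _ ≤ A.ncard + B.ncard := Set.ncard_union_le A B
    _ ≤ (t - s.length * d) * (t - (t - (s.length + 1) * d)) ^ k + t ^ k := by
      gcongr
      · exact (Set.ncard_le_ncard hAs (hfin.subset fun p hp => hp.1)).trans
          (ncard_isAdmissible_node_eq_le s)
      · exact ncard_isAdmissible_child_le blk hblk hL i₀
    _ ≤ (t - min (s.length * d) t) * (min (s.length * d) t + d) ^ k + t ^ k := by
      have := add_one_mul s.length d
      gcongr ?_ * ?_ ^ k + _ <;> omega

end

/-- For every `r ≥ 2` and `ε > 0` there is a constant `C` such that for all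
sufficiently large `t` and every `n > t ^ C`, there is an `r`-uniform hypergraph
(vertex set `V`, edge set `E`) with a `t`-thick partition into `n` blocks (fibers of
`f : V → Fin n`) such that at most `((r-1)^(r-1)/r^r + ε) t^r` edges meet each block,
and there is no independent transversal. -/
theorem stmt_5 (r : ℕ) (hr : 2 ≤ r) (ε : ℝ) (hε : 0 < ε) :
    ∃ C : ℝ, ∃ t₀ : ℕ, ∀ t : ℕ, t₀ ≤ t → ∀ n : ℕ, (t : ℝ) ^ C < (n : ℝ) →
      ∃ (V : Type) (_ : Fintype V) (E : Set (Finset V)) (f : V → Fin n),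
        (∀ e ∈ E, e.card = r) ∧
        (∀ i : Fin n, t ≤ (f ⁻¹' {i}).ncard) ∧
        (∀ i : Fin n,
          ({e ∈ E | ∃ v ∈ e, f v = i}.ncard : ℝ) ≤
            (((r : ℝ) - 1) ^ (r - 1) / (r : ℝ) ^ r + ε) * (t : ℝ) ^ r) ∧
        ¬∃ T : Fin n → V, (∀ i, f (T i) = i) ∧ ∀ e ∈ E, ¬(e : Set V) ⊆ Set.range T := by
  obtain ⟨k, rfl⟩ : ∃ k, r = k + 1 := ⟨r - 1, by omega⟩
  obtain ⟨L, hL, hdepth⟩ := exists_depth ((k + 1) * 2 ^ k) (by positivity) hε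
  obtain ⟨t₀, ht₀⟩ := eventually_atTop.1 (hdepth.and (eventually_ge_atTop (k + 1)))
  refine ⟨(2 * L : ℕ), t₀, fun t ht n hn => ?_⟩
  obtain ⟨⟨hdt, hdε⟩, hkt⟩ := ht₀ t ht
  set d := t / L + 1
  have hLd : t ≤ L * d := (Nat.lt_mul_div_succ t hL).le
  obtain ⟨blk, hblk⟩ := exists_injOn_length_le (Fin t × Fin k) (Fin n) L <| by
    rw [Real.rpow_natCast] at hn
    have hnodes : t * k + 1 ≤ t ^ 2 := by nlinarith
    simpa using (Nat.pow_le_pow_left hnodes L).trans (by rw [← pow_mul]; exact_mod_cast hn.le)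
  refine ⟨Fin n × Fin t, inferInstance, treeEdges blk d, Prod.fst, ?_, fun i => ?_, fun i => ?_, ?_⟩
  · rintro _ ⟨p, hp, rfl⟩
    exact TreeEdge.card_toFinset blk hblk hLd hp
  · rw [Set.preimage_fst_singleton_eq_range,
      Set.ncard_range_of_injective (Prod.mk_right_injective i)]
    simp
  · obtain ⟨x, hxt, hcount⟩ := ncard_treeEdges_meeting_le blk hblk hLd i
    calc _ ≤ (((t - x) * (x + d) ^ k + t ^ k : ℕ) : ℝ) := by exact_mod_cast hcount
      _ ≤ _ := by
        push_cast [hxt]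
        simpa using sub_mul_add_pow_add_pow_le k (x := x) (by positivity) (by exact_mod_cast hxt)
          (by positivity) (by exact_mod_cast hdt) (by exact_mod_cast hdε)
  · rintro ⟨T, hT, hfree⟩
    obtain ⟨e, he, hsub⟩ := exists_treeEdge_subset_range blk hLd T hT
    exact hfree e he hsub
end

section
/- Let t be a positive integer, let G be a finite simple graph, and let 𝒫 be a partition of the vertex set of G in which every block has size at least t and such that for every block B ∈ 𝒫 the number of edges of G with exactly one endpoint in B is at most (t/4)·|B|. Then there exist at least (t/2)^{|𝒫|} independent transversals of 𝒫 in G, where |𝒫| is the number of blocks. -/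
/-!
Fix a vertex `g i` in every block and, for a set `s` of blocks, count the transversals that
are independent on `s` and agree with `g` off `s`. Dropping a block `k` from `s` costs at most
a factor `t / 2`. The transversals for `s` through a vertex `v` of block `k` correspond to
those for `s \ {k}` that avoid the neighbours of `v`, and by induction each neighbour `w` lies
on at most a `2 / t` fraction of the latter; summed over the block, the at most `(t / 4)|B|`
boundary edges destroy at most half of `|B| ≥ t` copies of the count for `s \ {k}`. The
`2 / t` bound for `s` follows in turn, since the transversals through a fixed vertex of block
`k` number at most the count for `s \ {k}`.
-/

open Finset

namespace IndependentTransversal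

section outDegree

variable {V ι : Type*} [Fintype V] [DecidableEq ι] (G : SimpleGraph V) [DecidableRel G.Adj]
  (f : V → ι)

def outDegree (v : V) : ℕ := #{w | G.Adj v w ∧ f w ≠ f v}

variable {G f}

theorem card_filter_adj_le_outDegree {s : Finset ι} {v : V} (hv : f v ∉ s) :
    #{w | G.Adj v w ∧ f w ∈ s} ≤ outDegree G f v :=
  card_le_card <| monotone_filter_right _ fun _ _ ⟨hadj, hw⟩ => ⟨hadj, fun h => hv (h ▸ hw)⟩

end outDegree

variable {V ι : Type*} [Fintype V] [DecidableEq V] [Fintype ι] [DecidableEq ι]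
  (G : SimpleGraph V) [DecidableRel G.Adj] (f : V → ι) (g : ι → V)

def indepTransversalsOn (s : Finset ι) : Finset (ι → V) :=
  {T | (∀ i, f (T i) = i) ∧ (∀ i ∉ s, T i = g i) ∧ ∀ i ∈ s, ∀ j ∈ s, ¬G.Adj (T i) (T j)}

variable {G f g}

theorem mem_indepTransversalsOn {s : Finset ι} {T : ι → V} :
    T ∈ indepTransversalsOn G f g s ↔
      (∀ i, f (T i) = i) ∧ (∀ i ∉ s, T i = g i) ∧ ∀ i ∈ s, ∀ j ∈ s, ¬G.Adj (T i) (T j) := by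
  simp [indepTransversalsOn]

theorem indepTransversalsOn_empty (hg : ∀ i, f (g i) = i) :
    indepTransversalsOn G f g ∅ = {g} := by
  ext T
  simp only [mem_indepTransversalsOn, notMem_empty, not_false_eq_true, forall_const,
    IsEmpty.forall_iff, implies_true, and_true, mem_singleton]
  exact ⟨fun ⟨_, h⟩ => funext h, by rintro rfl; exact ⟨hg, fun _ => rfl⟩⟩

theorem coe_indepTransversalsOn_univ :
    (indepTransversalsOn G f g univ : Set (ι → V)) =
      {T | (∀ i, f (T i) = i) ∧ ∀ i j, ¬G.Adj (T i) (T j)} := by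
  ext T
  simp [mem_indepTransversalsOn]

theorem card_eq_sum_card_filter_apply_eq (s : Finset ι) (k : ι) :
    #(indepTransversalsOn G f g s) =
      ∑ v with f v = k, #{T ∈ indepTransversalsOn G f g s | T k = v} :=
  card_eq_sum_card_fiberwise fun T hT => by
    simp [(mem_indepTransversalsOn.1 hT).1 k]

theorem card_filter_apply_eq_eq_card_erase_nonadj (hg : ∀ i, f (g i) = i) {s : Finset ι}
    {k : ι} (hk : k ∈ s) {v : V} (hv : f v = k) :
    #{T ∈ indepTransversalsOn G f g s | T k = v} =
      #{T ∈ indepTransversalsOn G f g (s.erase k) | ∀ j ∈ s.erase k, ¬G.Adj v (T j)} := by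
  refine card_nbij' (Function.update · k (g k)) (Function.update · k v) ?_ ?_ ?_ ?_
  · intro T hT
    simp only [coe_filter, mem_indepTransversalsOn, Set.mem_ofPred_eq, mem_erase] at hT ⊢
    obtain ⟨⟨h1, h2, h3⟩, rfl⟩ := hT
    refine ⟨⟨fun i => ?_, fun i hi => ?_, fun i hi j hj => ?_⟩, fun j hj => ?_⟩ <;>
      grind [Function.update_apply]
  · intro T hT
    simp only [coe_filter, mem_indepTransversalsOn, Set.mem_ofPred_eq, mem_erase] at hT ⊢
    obtain ⟨⟨h1, h2, h3⟩, h4⟩ := hT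
    refine ⟨⟨fun i => ?_, fun i hi => ?_, fun i hi j hj => ?_⟩, by simp⟩ <;>
      grind [Function.update_apply, SimpleGraph.Adj.symm, SimpleGraph.irrefl]
  · intro T hT
    simp only [coe_filter, Set.mem_ofPred_eq] at hT
    simp [← hT.2]
  · intro T hT
    simp only [coe_filter, mem_indepTransversalsOn, Set.mem_ofPred_eq] at hT
    simp [← hT.1.2.1 k (notMem_erase k s)]

theorem card_le_card_filter_nonadj_add_sum (s : Finset ι) (v : V) :
    #(indepTransversalsOn G f g s) ≤
      #{T ∈ indepTransversalsOn G f g s | ∀ j ∈ s, ¬G.Adj v (T j)} +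
        ∑ w with G.Adj v w ∧ f w ∈ s, #{T ∈ indepTransversalsOn G f g s | T (f w) = w} := by
  rw [← card_filter_add_card_filter_not (s := indepTransversalsOn G f g s)
    fun T => ∀ j ∈ s, ¬G.Adj v (T j)]
  gcongr
  refine (card_le_card fun T hT => ?_).trans card_biUnion_le
  simp only [mem_filter, not_forall, not_not] at hT
  obtain ⟨hT, j, hj, hadj⟩ := hT
  have hTj := (mem_indepTransversalsOn.1 hT).1 j
  simp only [mem_biUnion, mem_filter, mem_univ, true_and]
  exact ⟨T j, ⟨hadj, by rwa [hTj]⟩, hT, by rw [hTj]⟩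

theorem card_sub_outDegree_mul_le (hg : ∀ i, f (g i) = i) {s : Finset ι} {k : ι} (hk : k ∈ s)
    {v : V} (hv : f v = k) {q : ℝ} (hq : 0 ≤ q)
    (hthr : ∀ j ∈ s.erase k, ∀ w, f w = j →
      #{T ∈ indepTransversalsOn G f g (s.erase k) | T j = w} ≤ q) :
    #(indepTransversalsOn G f g (s.erase k)) - outDegree G f v * q ≤
      #{T ∈ indepTransversalsOn G f g s | T k = v} := by
  have hsum : ∑ w with G.Adj v w ∧ f w ∈ s.erase k,
      (#{T ∈ indepTransversalsOn G f g (s.erase k) | T (f w) = w} : ℝ) ≤ outDegree G f v * q :=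
    calc _ ≤ ∑ w with G.Adj v w ∧ f w ∈ s.erase k, q :=
          sum_le_sum fun w hw => hthr _ (mem_filter.1 hw).2.2 w rfl
      _ = #{w | G.Adj v w ∧ f w ∈ s.erase k} * q := by rw [sum_const, nsmul_eq_mul]
      _ ≤ outDegree G f v * q := by
          gcongr; exact card_filter_adj_le_outDegree (by simp [hv])
  have hcover : (#(indepTransversalsOn G f g (s.erase k)) : ℝ) ≤
      #{T ∈ indepTransversalsOn G f g s | T k = v} + ∑ w with G.Adj v w ∧ f w ∈ s.erase k,
        (#{T ∈ indepTransversalsOn G f g (s.erase k) | T (f w) = w} : ℝ) := by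
    rw [card_filter_apply_eq_eq_card_erase_nonadj hg hk hv]
    exact_mod_cast card_le_card_filter_nonadj_add_sum (s.erase k) v
  linarith

theorem mul_card_erase_le_card {t : ℝ} (ht : 0 < t) (hg : ∀ i, f (g i) = i) {s : Finset ι}
    {k : ι} (hk : k ∈ s) (hthick : t ≤ #{v | f v = k})
    (hdeg : ∑ v with f v = k, (outDegree G f v : ℝ) ≤ t / 4 * #{v | f v = k})
    (hthr : ∀ j ∈ s.erase k, ∀ w, f w = j →
      #{T ∈ indepTransversalsOn G f g (s.erase k) | T j = w} ≤
        2 / t * #(indepTransversalsOn G f g (s.erase k))) :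
    t / 2 * #(indepTransversalsOn G f g (s.erase k)) ≤ #(indepTransversalsOn G f g s) := by
  set c : ℝ := (#(indepTransversalsOn G f g (s.erase k)) : ℝ)
  set b : ℝ := (#{v | f v = k} : ℝ)
  have hc : 0 ≤ c := by positivity
  have hq : 0 ≤ 2 / t * c := by positivity
  have hhalf : t / 4 * b * (2 / t * c) = b * c / 2 := by field_simp; ring
  calc t / 2 * c ≤ b * c - t / 4 * b * (2 / t * c) := by rw [hhalf]; nlinarith
    _ ≤ b * c - (∑ v with f v = k, (outDegree G f v : ℝ)) * (2 / t * c) := by gcongr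
    _ = ∑ v with f v = k, (c - outDegree G f v * (2 / t * c)) := by
        rw [sum_sub_distrib, sum_const, nsmul_eq_mul, sum_mul]
    _ ≤ ∑ v with f v = k, (#{T ∈ indepTransversalsOn G f g s | T k = v} : ℝ) :=
        sum_le_sum fun v hv => card_sub_outDegree_mul_le hg hk (mem_filter.1 hv).2 hq hthr
    _ = #(indepTransversalsOn G f g s) := by
        rw [card_eq_sum_card_filter_apply_eq s k, Nat.cast_sum]

theorem card_filter_apply_eq_le {t : ℝ} (ht : 0 < t) (hg : ∀ i, f (g i) = i)
    (hthick : ∀ i, t ≤ #{v | f v = i})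
    (hdeg : ∀ i, ∑ v with f v = i, (outDegree G f v : ℝ) ≤ t / 4 * #{v | f v = i})
    (s : Finset ι) : ∀ k ∈ s, ∀ u, f u = k →
      #{T ∈ indepTransversalsOn G f g s | T k = u} ≤ 2 / t * #(indepTransversalsOn G f g s) := by
  induction s using Finset.strongInduction with
  | H s ih =>
  intro k hk u hu
  have hstep := mul_card_erase_le_card ht hg hk (hthick k) (hdeg k) (ih _ (erase_ssubset hk))
  have hle : #{T ∈ indepTransversalsOn G f g s | T k = u} ≤
      #(indepTransversalsOn G f g (s.erase k)) := by
    rw [card_filter_apply_eq_eq_card_erase_nonadj hg hk hu]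
    exact card_filter_le _ _
  calc (#{T ∈ indepTransversalsOn G f g s | T k = u} : ℝ)
      ≤ #(indepTransversalsOn G f g (s.erase k)) := by exact_mod_cast hle
    _ = 2 / t * (t / 2 * #(indepTransversalsOn G f g (s.erase k))) := by field_simp
    _ ≤ 2 / t * #(indepTransversalsOn G f g s) := by gcongr

theorem pow_card_le_card_indepTransversalsOn {t : ℝ} (ht : 0 < t) (hg : ∀ i, f (g i) = i)
    (hthick : ∀ i, t ≤ #{v | f v = i})
    (hdeg : ∀ i, ∑ v with f v = i, (outDegree G f v : ℝ) ≤ t / 4 * #{v | f v = i})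
    (s : Finset ι) : (t / 2) ^ #s ≤ #(indepTransversalsOn G f g s) := by
  induction s using Finset.induction_on with
  | empty => simp [indepTransversalsOn_empty hg]
  | insert a s ha ih =>
    have hstep := mul_card_erase_le_card ht hg (mem_insert_self a s) (hthick a) (hdeg a)
      (card_filter_apply_eq_le ht hg hthick hdeg _)
    rw [erase_insert ha] at hstep
    rw [card_insert_of_notMem ha, pow_succ']
    exact (mul_le_mul_of_nonneg_left ih (by positivity)).trans hstep

section Blocks

variable {V ι : Type*} [Fintype V] [DecidableEq ι] (G : SimpleGraph V) [DecidableRel G.Adj]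
  (f : V → ι)

theorem ncard_preimage_singleton (i : ι) : (f ⁻¹' {i}).ncard = #{v | f v = i} := by
  rw [← Set.ncard_coe_finset]
  simp [Set.preimage]

theorem ncard_edges_leaving_eq_card_adj_pairs (i : ι) :
    {e ∈ G.edgeSet | ∃ v w, e = s(v, w) ∧ f v = i ∧ f w ≠ i}.ncard =
      #{p : V × V | G.Adj p.1 p.2 ∧ f p.1 = i ∧ f p.2 ≠ i} := by
  have himage : {e ∈ G.edgeSet | ∃ v w, e = s(v, w) ∧ f v = i ∧ f w ≠ i} =
      (fun p : V × V => s(p.1, p.2)) ''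
        ↑({p : V × V | G.Adj p.1 p.2 ∧ f p.1 = i ∧ f p.2 ≠ i} : Finset (V × V)) := by
    ext e
    induction e using Sym2.ind with
    | _ v w =>
      simp only [ne_eq, Set.mem_ofPred_eq, SimpleGraph.mem_edgeSet, Sym2.eq, Sym2.rel_iff',
        Prod.mk.injEq, Prod.swap_prod_mk, coe_filter, mem_univ, true_and, Set.mem_image,
        Prod.exists]
      grind [SimpleGraph.adj_comm]
  rw [himage, Set.InjOn.ncard_image, Set.ncard_coe_finset]
  rintro ⟨v, w⟩ hvw ⟨v', w'⟩ hvw' h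
  simp only [coe_filter, mem_univ, true_and, Set.mem_ofPred_eq] at hvw hvw'
  rcases Sym2.eq_iff.1 h with ⟨rfl, rfl⟩ | ⟨rfl, rfl⟩
  · rfl
  · exact absurd hvw.2.1 hvw'.2.2

theorem ncard_edges_leaving_eq_sum_outDegree (i : ι) :
    {e ∈ G.edgeSet | ∃ v w, e = s(v, w) ∧ f v = i ∧ f w ≠ i}.ncard =
      ∑ v with f v = i, outDegree G f v := by
  rw [ncard_edges_leaving_eq_card_adj_pairs, card_filter, Fintype.sum_prod_type, sum_filter]
  refine sum_congr rfl fun v _ => ?_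
  split_ifs with hv
  · simp only [outDegree, hv, true_and, card_filter]
  · simp [hv]

end Blocks

end IndependentTransversal

open Finset in
/-- Wanless–Wood for graphs: if the partition (fibers of `f`) is `t`-thick and each
block `B` meets at most `(t/4)·|B|` edges with exactly one endpoint in `B`, then there
are at least `(t/2) ^ (number of blocks)` independent transversals. -/
theorem stmt_8 {V ι : Type*} [Fintype V] [Fintype ι] (t : ℕ) (ht : 1 ≤ t)
    (G : SimpleGraph V) (f : V → ι)
    (hthick : ∀ i : ι, t ≤ (f ⁻¹' {i}).ncard)
    (hdeg : ∀ i : ι,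
      ({e ∈ G.edgeSet | ∃ v w, e = s(v, w) ∧ f v = i ∧ f w ≠ i}.ncard : ℝ) ≤
        (t : ℝ) / 4 * ((f ⁻¹' {i}).ncard : ℝ)) :
    ((t : ℝ) / 2) ^ (Fintype.card ι) ≤
      ({T : ι → V | (∀ i, f (T i) = i) ∧ ∀ i j, ¬G.Adj (T i) (T j)}.ncard : ℝ) := by
  classical
  open IndependentTransversal in
  choose g hg using fun i =>
    Set.nonempty_of_ncard_ne_zero (Nat.one_le_iff_ne_zero.mp (ht.trans (hthick i)))
  have hbound := pow_card_le_card_indepTransversalsOn (G := G) (Nat.cast_pos.mpr ht) hg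
    (fun i => by exact_mod_cast ncard_preimage_singleton f i ▸ hthick i)
    (fun i => by
      simpa only [ncard_preimage_singleton, ncard_edges_leaving_eq_sum_outDegree, Nat.cast_sum]
        using hdeg i)
    univ
  rwa [card_univ, ← Set.ncard_coe_finset, coe_indepTransversalsOn_univ] at hbound
end

section
/- Fix integers r ≥ 2 and t ≥ 1. Let G be an r-uniform hypergraph and let 𝒫 = {V₁, …, V_n} be a partition of its vertex set in which every block has size at least t. Suppose that for each i ∈ {1, …, n}, at most ((r−1)^{r−1}/r^r)·t^{r−1}·|V_i| stretched edges of G intersect V_i. Then there exist at least ((r−1)/r)^n · t^n independent transversals of 𝒫 in G. -/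
/-! Let `Φ(S)` count the independent transversals of the blocks indexed by `S` and put
`β = (r - 1) t / r`. By strong induction on `S`, `β Φ(S) ≤ Φ(S ∪ {j})` for `j ∉ S`. Of the
`Φ(S) |V_j|` ways to extend a transversal `T` of `S` by a vertex `v ∈ V_j`, a bad one puts a
stretched edge `e ∋ v` inside `T ∪ {v}`, so `T` contains the `r - 1` vertices of `e` outside
`V_j`. Deleting their blocks is injective on such `T`, and the induction hypothesis applied
`r - 1` times bounds their number by `Φ(S) / β^(r-1)`. At most `β^(r-1) |V_j| / r` edges are
involved, so at most `Φ(S) |V_j| / r` extensions are lost, and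
`Φ(S ∪ {j}) ≥ (1 - 1/r) |V_j| Φ(S) ≥ β Φ(S)`. Starting from `Φ(∅) = 1` this gives `β^n`. -/

open Finset

noncomputable section

open scoped Classical

variable {V ι : Type*} [Fintype V] (E : Set (Finset V)) (f : V → ι)

def indepTransversals (S : Finset ι) : Finset (Finset V) :=
  {T | Set.InjOn f T ∧ T.image f = S ∧ ∀ e ∈ E, ¬e ⊆ T}

def block (j : ι) : Finset V := {v | f v = j}

def stretchedEdgesAt (j : ι) : Finset (Finset V) :=
  {e | e ∈ E ∧ Set.InjOn f e ∧ ∃ v ∈ e, f v = j}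

variable {E f}

theorem mem_indepTransversals {S : Finset ι} {T : Finset V} :
    T ∈ indepTransversals E f S ↔ Set.InjOn f T ∧ T.image f = S ∧ ∀ e ∈ E, ¬e ⊆ T := by
  simp [indepTransversals]

theorem indepTransversals_empty (hE : ∀ e ∈ E, e.Nonempty) :
    indepTransversals E f ∅ = {∅} := by
  ext T
  simp only [mem_indepTransversals, image_eq_empty, mem_singleton]
  constructor
  · exact fun h => h.2.1
  · rintro rfl
    exact ⟨by simp, rfl, fun e he h => (hE e he).ne_empty (subset_empty.1 h)⟩

theorem card_filter_ne_of_mem_stretchedEdgesAt {j : ι} {e : Finset V}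
    (he : e ∈ stretchedEdgesAt E f j) : #{v ∈ e | f v ≠ j} = #e - 1 := by
  obtain ⟨-, hinj, w, hw, rfl⟩ := by simpa [stretchedEdgesAt] using he
  rw [← card_erase_of_mem hw]
  congr 1
  ext v
  simp only [mem_filter, mem_erase]
  exact ⟨fun h => ⟨fun hvw => h.2 (hvw ▸ rfl), h.1⟩,
    fun h => ⟨h.2, fun hf => h.1 (hinj h.2 hw hf)⟩⟩

theorem pow_card_mul_le_of_forall_ssubset {φ : Finset ι → ℝ} {β : ℝ} (hβ : 0 ≤ β)
    {S : Finset ι} (hgrow : ∀ S' ⊂ S, ∀ j ∈ S, j ∉ S' → β * φ S' ≤ φ (insert j S'))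
    {B : Finset ι} (hB : B ⊆ S) : β ^ #B * φ (S \ B) ≤ φ S := by
  induction B using Finset.induction_on with
  | empty => simp
  | insert b B hb ih =>
    have hbS : b ∈ S := hB (mem_insert_self b B)
    have hbSB : b ∈ S \ B := mem_sdiff.2 ⟨hbS, hb⟩
    have hstep : β * φ ((S \ B).erase b) ≤ φ (S \ B) := by
      simpa only [insert_erase hbSB] using
        hgrow _ ((erase_ssubset hbSB).trans_subset sdiff_subset) b hbS (notMem_erase b _)
    calc β ^ #(insert b B) * φ (S \ insert b B)
        = β ^ #B * (β * φ ((S \ B).erase b)) := by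
          rw [card_insert_of_notMem hb, sdiff_insert, pow_succ, mul_assoc]
      _ ≤ β ^ #B * φ (S \ B) := by gcongr
      _ ≤ φ S := ih ((subset_insert b B).trans hB)

theorem filter_union_eq_of_injOn {T A : Finset V} (hinj : Set.InjOn f T) (hAT : A ⊆ T) :
    {v ∈ T | f v ∉ A.image f} ∪ A = T := by
  ext v
  simp only [mem_union, mem_filter, mem_image, not_exists, not_and]
  constructor
  · rintro (h | h)
    exacts [h.1, hAT h]
  · intro hv
    by_cases h : ∃ a ∈ A, f a = f v
    · obtain ⟨a, ha, hav⟩ := h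
      exact Or.inr (hinj (hAT ha) hv hav ▸ ha)
    · push Not at h
      exact Or.inl ⟨hv, h⟩

theorem card_filter_superset_le (S : Finset ι) (A : Finset V) :
    #{T ∈ indepTransversals E f S | A ⊆ T} ≤ #(indepTransversals E f (S \ A.image f)) := by
  refine card_le_card_of_injOn (fun T => {v ∈ T | f v ∉ A.image f}) ?_ ?_
  · intro T hT
    rw [mem_coe, mem_filter, mem_indepTransversals] at hT
    rw [mem_coe, mem_indepTransversals]
    obtain ⟨⟨hinj, rfl, hind⟩, -⟩ := hT
    refine ⟨hinj.mono (coe_subset.2 (filter_subset _ _)), ?_,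
      fun e he h => hind e he (h.trans (filter_subset _ _))⟩
    ext i
    simp only [mem_image, mem_filter, mem_sdiff]
    aesop
  · intro T₁ hT₁ T₂ hT₂ h
    rw [mem_coe, mem_filter, mem_indepTransversals] at hT₁ hT₂
    rw [← filter_union_eq_of_injOn hT₁.1.1 hT₁.2, ← filter_union_eq_of_injOn hT₂.1.1 hT₂.2]
    exact congrArg (· ∪ A) h

theorem pow_card_mul_card_filter_superset_le {β : ℝ} (hβ : 0 ≤ β) {S : Finset ι}
    (hgrow : ∀ S' ⊂ S, ∀ j ∈ S, j ∉ S' →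
      β * #(indepTransversals E f S') ≤ #(indepTransversals E f (insert j S')))
    (A : Finset V) :
    β ^ #A * #{T ∈ indepTransversals E f S | A ⊆ T} ≤ #(indepTransversals E f S) := by
  obtain h | ⟨T, hT⟩ := (filter (A ⊆ ·) (indepTransversals E f S)).eq_empty_or_nonempty
  · rw [h, card_empty, Nat.cast_zero, mul_zero]
    positivity
  obtain ⟨hT, hAT⟩ := mem_filter.1 hT
  obtain ⟨hinj, rfl, -⟩ := mem_indepTransversals.1 hT
  have hcard : #(A.image f) = #A := card_image_of_injOn (hinj.mono (coe_subset.2 hAT))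
  calc β ^ #A * #{T' ∈ indepTransversals E f (T.image f) | A ⊆ T'}
      ≤ β ^ #(A.image f) * #(indepTransversals E f (T.image f \ A.image f)) := by
        rw [hcard]
        exact mul_le_mul_of_nonneg_left (by exact_mod_cast card_filter_superset_le _ A)
          (by positivity)
    _ ≤ #(indepTransversals E f (T.image f)) :=
        pow_card_mul_le_of_forall_ssubset hβ hgrow (image_subset_image hAT)

theorem notMem_of_mem_indepTransversals {S : Finset ι} {T : Finset V} {v : V}
    (hT : T ∈ indepTransversals E f S) (hv : f v ∉ S) : v ∉ T := by
  obtain ⟨-, rfl, -⟩ := mem_indepTransversals.1 hT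
  exact fun h => hv (mem_image_of_mem f h)

theorem mem_of_subset_insert_of_mem_indepTransversals {S : Finset ι} {T e : Finset V} {v : V}
    (hT : T ∈ indepTransversals E f S) (he : e ∈ E) (h : e ⊆ insert v T) : v ∈ e := by
  by_contra hv
  exact (mem_indepTransversals.1 hT).2.2 e he ((subset_insert_iff_of_notMem hv).1 h)

theorem card_filter_insert_mem_le {S : Finset ι} {j : ι} (hj : j ∉ S) :
    #{p ∈ indepTransversals E f S ×ˢ block f j |
        insert p.2 p.1 ∈ indepTransversals E f (insert j S)} ≤
      #(indepTransversals E f (insert j S)) := by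
  refine card_le_card_of_injOn (fun p => insert p.2 p.1) (fun p hp => (mem_filter.1 hp).2) ?_
  rintro ⟨T₁, v₁⟩ hp₁ ⟨T₂, v₂⟩ hp₂ h
  simp only [mem_coe, mem_filter, mem_product, block, mem_univ, true_and] at hp₁ hp₂ h
  have hv₁ := notMem_of_mem_indepTransversals hp₁.1.1 (hp₁.1.2 ▸ hj)
  have hv₂ := notMem_of_mem_indepTransversals hp₂.1.1 (hp₂.1.2 ▸ hj)
  have hv : v₁ = v₂ := (mem_insert.1 (h ▸ mem_insert_self v₁ T₁)).resolve_right
    (notMem_of_mem_indepTransversals hp₂.1.1 (hp₁.1.2 ▸ hj))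
  subst hv
  rw [← erase_insert hv₁, h, erase_insert hv₂]

theorem exists_subset_insert_of_insert_notMem {S : Finset ι} {T : Finset V} {v : V}
    (hT : T ∈ indepTransversals E f S) (hv : f v ∉ S)
    (hins : insert v T ∉ indepTransversals E f (insert (f v) S)) :
    ∃ e ∈ stretchedEdgesAt E f (f v), e ⊆ insert v T := by
  have hvT := notMem_of_mem_indepTransversals hT hv
  obtain ⟨hinj, rfl, -⟩ := mem_indepTransversals.1 hT
  have hinj' : Set.InjOn f ↑(insert v T) := by
    rw [coe_insert, Set.injOn_insert (mem_coe.not.2 hvT), ← coe_image]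
    exact ⟨hinj, hv⟩
  simp only [mem_indepTransversals, image_insert, hinj', true_and, not_forall, not_not] at hins
  obtain ⟨e, he, hsub⟩ := hins
  refine ⟨e, ?_, hsub⟩
  simp only [stretchedEdgesAt, mem_filter, mem_univ, true_and]
  exact ⟨he, hinj'.mono (coe_subset.2 hsub), v,
    mem_of_subset_insert_of_mem_indepTransversals hT he hsub, rfl⟩

theorem card_filter_subset_insert_le {S : Finset ι} {j : ι} {e : Finset V}
    (he : e ∈ stretchedEdgesAt E f j) :
    #{p ∈ indepTransversals E f S ×ˢ block f j | e ⊆ insert p.2 p.1} ≤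
      #{T ∈ indepTransversals E f S | {v ∈ e | f v ≠ j} ⊆ T} := by
  simp only [stretchedEdgesAt, mem_filter, mem_univ, true_and] at he
  refine card_le_card_of_injOn Prod.fst ?_ ?_
  · rintro ⟨T, v⟩ hp
    simp only [mem_coe, mem_filter, mem_product, block, mem_univ, true_and] at hp
    obtain ⟨⟨hT, rfl⟩, hsub⟩ := hp
    refine mem_filter.2 ⟨hT, fun x hx => ?_⟩
    obtain ⟨hxe, hxv⟩ := mem_filter.1 hx
    exact (mem_insert.1 (hsub hxe)).resolve_left (fun h => hxv (h ▸ rfl))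
  · rintro ⟨T₁, v₁⟩ hp₁ ⟨T₂, v₂⟩ hp₂ (rfl : T₁ = T₂)
    simp only [mem_coe, mem_filter, mem_product, block, mem_univ, true_and] at hp₁ hp₂
    have h₁ := mem_of_subset_insert_of_mem_indepTransversals hp₁.1.1 he.1 hp₁.2
    have h₂ := mem_of_subset_insert_of_mem_indepTransversals hp₂.1.1 he.1 hp₂.2
    rw [he.2.1 h₁ h₂ (hp₁.1.2.trans hp₂.1.2.symm)]

theorem card_mul_card_block_le {S : Finset ι} {j : ι} (hj : j ∉ S) :
    #(indepTransversals E f S) * #(block f j) ≤ #(indepTransversals E f (insert j S)) +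
      ∑ e ∈ stretchedEdgesAt E f j,
        #{p ∈ indepTransversals E f S ×ˢ block f j | e ⊆ insert p.2 p.1} := by
  rw [← card_product, ← card_filter_add_card_filter_not
    (fun p => insert p.2 p.1 ∈ indepTransversals E f (insert j S))]
  gcongr
  · exact card_filter_insert_mem_le hj
  · refine (card_le_card fun p hp => ?_).trans card_biUnion_le
    obtain ⟨hp, hins⟩ := mem_filter.1 hp
    obtain ⟨hT, hv⟩ := mem_product.1 hp
    obtain rfl : f p.2 = j := by simpa [block] using hv
    obtain ⟨e, he, hsub⟩ := exists_subset_insert_of_insert_notMem hT hj hins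
    exact mem_biUnion.2 ⟨e, he, mem_filter.2 ⟨hp, hsub⟩⟩

theorem mul_card_indepTransversals_le_card_insert {r : ℕ} {β : ℝ} (hβ : 0 ≤ β)
    (hE : ∀ e ∈ E, #e = r)
    (hdeg : ∀ j, (#(stretchedEdgesAt E f j) : ℝ) ≤ β ^ (r - 1) / r * #(block f j))
    (hblock : ∀ j, β ≤ (1 - 1 / r) * #(block f j)) (S : Finset ι) {j : ι} (hj : j ∉ S) :
    β * #(indepTransversals E f S) ≤ #(indepTransversals E f (insert j S)) := by
  induction S using Finset.strongInduction generalizing j with | H S ih => ?_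
  obtain rfl | hβpos := hβ.eq_or_lt
  · simp
  have hcount := Nat.cast_le (α := ℝ) |>.2 (card_mul_card_block_le (E := E) (f := f) hj)
  set N : ℝ := (#(indepTransversals E f S) : ℝ)
  set m : ℝ := (#(block f j) : ℝ)
  set bad : Finset V → ℕ :=
    fun e => #{p ∈ indepTransversals E f S ×ˢ block f j | e ⊆ insert p.2 p.1}
  have hbad : ∀ e ∈ stretchedEdgesAt E f j, β ^ (r - 1) * bad e ≤ N := by
    intro e he
    have hA : #{v ∈ e | f v ≠ j} = r - 1 := by
      rw [card_filter_ne_of_mem_stretchedEdgesAt he, hE e (mem_filter.1 he).2.1]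
    calc β ^ (r - 1) * bad e
        ≤ β ^ #{v ∈ e | f v ≠ j} * #{T ∈ indepTransversals E f S | {v ∈ e | f v ≠ j} ⊆ T} := by
          rw [hA]
          exact mul_le_mul_of_nonneg_left (by exact_mod_cast card_filter_subset_insert_le he)
            (by positivity)
      _ ≤ N := pow_card_mul_card_filter_superset_le hβ (fun S' hS' _ _ hi => ih S' hS' hi) _
  have hsum : ∑ e ∈ stretchedEdgesAt E f j, (bad e : ℝ) ≤ m * N / r := by
    refine le_of_mul_le_mul_left ?_ (pow_pos hβpos (r - 1))
    calc β ^ (r - 1) * ∑ e ∈ stretchedEdgesAt E f j, (bad e : ℝ)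
        ≤ ∑ _e ∈ stretchedEdgesAt E f j, N := by rw [mul_sum]; exact sum_le_sum hbad
      _ = #(stretchedEdgesAt E f j) * N := by rw [sum_const, nsmul_eq_mul]
      _ ≤ β ^ (r - 1) / r * m * N := by gcongr; exact hdeg j
      _ = β ^ (r - 1) * (m * N / r) := by ring
  push_cast at hcount
  calc β * N ≤ (1 - 1 / r) * m * N := by gcongr; exact hblock j
    _ = N * m - m * N / r := by ring
    _ ≤ #(indepTransversals E f (insert j S)) := by linarith

theorem pow_card_le_card_indepTransversals_univ [Fintype ι] {r : ℕ} {β : ℝ} (hβ : 0 ≤ β)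
    (hr : 1 ≤ r) (hE : ∀ e ∈ E, #e = r)
    (hdeg : ∀ j, (#(stretchedEdgesAt E f j) : ℝ) ≤ β ^ (r - 1) / r * #(block f j))
    (hblock : ∀ j, β ≤ (1 - 1 / r) * #(block f j)) :
    β ^ Fintype.card ι ≤ #(indepTransversals E f univ) := by
  have hchain := pow_card_mul_le_of_forall_ssubset hβ
    (fun S _ j _ hj => mul_card_indepTransversals_le_card_insert hβ hE hdeg hblock S hj)
    (subset_refl univ)
  rwa [Finset.sdiff_self, indepTransversals_empty fun e he => card_pos.1 (hE e he ▸ hr),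
    card_singleton, card_univ, Nat.cast_one, mul_one] at hchain

theorem ncard_indepSections_eq_card [Fintype ι] :
    {T : ι → V | (∀ i, f (T i) = i) ∧ ∀ e ∈ E, ¬(e : Set V) ⊆ Set.range T}.ncard =
      #(indepTransversals E f univ) := by
  have hrange : ∀ T : ι → V, ((univ.image T : Finset V) : Set V) = Set.range T := by simp
  rw [← Set.ncard_coe_finset]
  refine Set.ncard_congr (fun T _ => univ.image T) ?_ ?_ ?_
  · rintro T ⟨hsec, hind⟩
    rw [mem_coe, mem_indepTransversals, hrange]
    refine ⟨?_, ?_, fun e he h => hind e he (hrange T ▸ coe_subset.2 h)⟩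
    · rintro _ ⟨i, rfl⟩ _ ⟨k, rfl⟩ h
      rw [hsec, hsec] at h
      rw [h]
    · ext i
      simp only [mem_image, mem_univ, true_and, exists_exists_eq_and, hsec, exists_eq]
  · rintro T₁ T₂ ⟨hsec₁, -⟩ ⟨hsec₂, -⟩ h
    funext i
    obtain ⟨k, -, hk⟩ := mem_image.1 (h ▸ mem_image_of_mem T₁ (mem_univ i))
    rw [← hk, ← hsec₁ i, ← hk, hsec₂]
  · intro T hT
    obtain ⟨hinj, himg, hind⟩ := mem_indepTransversals.1 (mem_coe.1 hT)
    have hsurj : ∀ i, ∃ v ∈ T, f v = i := fun i => mem_image.1 (himg ▸ mem_univ i)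
    choose g hgT hgf using hsurj
    have hg : univ.image g = T := by
      ext v
      refine ⟨fun hv => ?_, fun hv => mem_image.2 ⟨f v, mem_univ _, hinj (hgT _) hv (hgf _)⟩⟩
      obtain ⟨i, -, rfl⟩ := mem_image.1 hv
      exact hgT i
    refine ⟨g, ⟨hgf, fun e he h => hind e he ?_⟩, hg⟩
    rwa [← hrange, hg, coe_subset] at h

theorem ncard_preimage_singleton_eq_card_block (i : ι) : (f ⁻¹' {i}).ncard = #(block f i) := by
  rw [← Set.ncard_coe_finset]
  congr
  ext v
  simp [block]

theorem ncard_stretched_eq_card_stretchedEdgesAt (i : ι) :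
    {e ∈ E | (∀ v ∈ e, ∀ w ∈ e, v ≠ w → f v ≠ f w) ∧ ∃ v ∈ e, f v = i}.ncard =
      #(stretchedEdgesAt E f i) := by
  rw [← Set.ncard_coe_finset]
  congr
  ext e
  simp [stretchedEdgesAt, Set.InjOn, not_imp_not]

end

theorem stmt_9_general {V ι : Type*} [Fintype V] [Fintype ι] (r t : ℕ) (hr : 2 ≤ r)
    (E : Set (Finset V)) (hE : ∀ e ∈ E, e.card = r) (f : V → ι)
    (hthick : ∀ i : ι, t ≤ (f ⁻¹' {i}).ncard)
    (hdeg : ∀ i : ι,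
      ({e ∈ E | (∀ v ∈ e, ∀ w ∈ e, v ≠ w → f v ≠ f w) ∧ ∃ v ∈ e, f v = i}.ncard : ℝ) ≤
        ((r : ℝ) - 1) ^ (r - 1) / (r : ℝ) ^ r * (t : ℝ) ^ (r - 1) * ((f ⁻¹' {i}).ncard : ℝ)) :
    (((r : ℝ) - 1) / (r : ℝ)) ^ (Fintype.card ι) * (t : ℝ) ^ (Fintype.card ι) ≤
      ({T : ι → V | (∀ i, f (T i) = i) ∧ ∀ e ∈ E, ¬(e : Set V) ⊆ Set.range T}.ncard : ℝ) := by
  have hr1 : (1 : ℝ) ≤ r := by exact_mod_cast (by omega : 1 ≤ r)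
  have hcoef : ((r - 1) / r * t : ℝ) ^ (r - 1) / r = (r - 1) ^ (r - 1) / r ^ r * t ^ (r - 1) := by
    calc ((r - 1) / r * t : ℝ) ^ (r - 1) / r
        = (r - 1) ^ (r - 1) / (r ^ (r - 1) * r) * t ^ (r - 1) := by rw [mul_pow, div_pow]; ring
      _ = (r - 1) ^ (r - 1) / r ^ r * t ^ (r - 1) := by
          rw [← pow_succ, Nat.sub_add_cancel (by omega)]
  rw [ncard_indepSections_eq_card, ← mul_pow]
  refine pow_card_le_card_indepTransversals_univ (by positivity) (by omega) hE
    (fun j => ?_) (fun j => ?_)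
  · rw [← ncard_stretched_eq_card_stretchedEdgesAt, ← ncard_preimage_singleton_eq_card_block,
      hcoef]
    exact hdeg j
  · rw [← ncard_preimage_singleton_eq_card_block, one_sub_div (by positivity)]
    exact mul_le_mul_of_nonneg_left (by exact_mod_cast hthick j) (by positivity)

/-- Wanless–Wood for hypergraphs: if `G` is `r`-uniform, the partition (fibers of `f`)
is `t`-thick, and each block `Vᵢ` meets at most `((r-1)^(r-1)/r^r)·t^(r-1)·|Vᵢ|`
stretched edges, then there are at least `((r-1)/r)^n · t^n` independent transversals,
where `n` is the number of blocks. -/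
theorem stmt_9 {V ι : Type*} [Fintype V] [Fintype ι] (r t : ℕ) (hr : 2 ≤ r) (ht : 1 ≤ t)
    (E : Set (Finset V)) (hE : ∀ e ∈ E, e.card = r) (f : V → ι)
    (hthick : ∀ i : ι, t ≤ (f ⁻¹' {i}).ncard)
    (hdeg : ∀ i : ι,
      ({e ∈ E | (∀ v ∈ e, ∀ w ∈ e, v ≠ w → f v ≠ f w) ∧ ∃ v ∈ e, f v = i}.ncard : ℝ) ≤
        ((r : ℝ) - 1) ^ (r - 1) / (r : ℝ) ^ r * (t : ℝ) ^ (r - 1) * ((f ⁻¹' {i}).ncard : ℝ)) :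
    (((r : ℝ) - 1) / (r : ℝ)) ^ (Fintype.card ι) * (t : ℝ) ^ (Fintype.card ι) ≤
      ({T : ι → V | (∀ i, f (T i) = i) ∧ ∀ e ∈ E, ¬(e : Set V) ⊆ Set.range T}.ncard : ℝ) :=
  stmt_9_general r t hr E hE f hthick hdeg
end

section
/- For every real β > 0 there exist a finite simple graph G and a partition 𝒫 of its vertex set such that every block B ∈ 𝒫 satisfies: the number of edges of G with at least one endpoint in B is at most β·|B|², and there is no independent transversal of 𝒫 in G. (Concretely, for a large integer k one may take G to be the disjoint union of k² stars S₁, …, S_{k²}, each with k+1 vertices, with 𝒫 consisting of the block V₀ of all star centers together with, for each i, the block V_i of the k leaves of S_i; then each block B is incident with at most |B|²/k edges and 𝒫 has no independent transversal.) -/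
/-!
Take `k > 1/β` and the disjoint union of `k²` stars `K_{1,k}`, partitioned into the block of the
`k²` centres and, for each star, the block of its `k` leaves. The centre block meets all `k³`
edges and a leaf block meets `k` edges, both at most `β` times the square of the block size.
A transversal contains some centre and also a leaf of that centre's star, which are adjacent.
-/

open SimpleGraph

theorem Set.ncard_range_le {α β : Type*} [Finite α] (f : α → β) :
    (Set.range f).ncard ≤ Nat.card α := by
  rw [← Set.image_univ, ← Set.ncard_univ]
  exact Set.ncard_image_le

variable {ι κ : Type*}

/-- The disjoint union of the stars `K_{1,|κ|}` indexed by `ι`: `(i, none)` is the centre of the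
`i`-th star and `(i, some j)` its leaves. -/
def starForest (ι κ : Type*) : SimpleGraph (ι × Option κ) :=
  fromEdgeSet (Set.range fun p : ι × κ => s((p.1, none), (p.1, some p.2)))

def starForestBlock : ι × Option κ → Option ι
  | (_, none) => none
  | (i, some _) => some i

theorem starForestBlock_surjective [Nonempty ι] [Nonempty κ] :
    Function.Surjective (starForestBlock : ι × Option κ → Option ι)
  | none => ⟨(Classical.arbitrary ι, none), rfl⟩
  | some i => ⟨(i, some (Classical.arbitrary κ)), rfl⟩

theorem starForestBlock_preimage_none :
    (starForestBlock : ι × Option κ → Option ι) ⁻¹' {none} = Set.range fun i => (i, none) := by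
  ext ⟨i, _ | j⟩ <;> simp [starForestBlock]

theorem starForestBlock_preimage_some (i : ι) :
    (starForestBlock : ι × Option κ → Option ι) ⁻¹' {some i} =
      Set.range fun j => (i, some j) := by
  ext ⟨i', _ | j⟩ <;> simp [starForestBlock, eq_comm]

theorem ncard_starForestBlock_preimage_none :
    ((starForestBlock : ι × Option κ → Option ι) ⁻¹' {none}).ncard = Nat.card ι := by
  rw [starForestBlock_preimage_none, Set.ncard_range_of_injective fun _ _ h => (Prod.ext_iff.1 h).1]

theorem ncard_starForestBlock_preimage_some (i : ι) :
    ((starForestBlock : ι × Option κ → Option ι) ⁻¹' {some i}).ncard = Nat.card κ := by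
  rw [starForestBlock_preimage_some,
    Set.ncard_range_of_injective fun _ _ h => Option.some_injective _ (Prod.ext_iff.1 h).2]

theorem starForest_edgeSet_subset :
    (starForest ι κ).edgeSet ⊆ Set.range fun p : ι × κ => s((p.1, none), (p.1, some p.2)) := by
  rw [starForest, edgeSet_fromEdgeSet]
  exact Set.sdiff_subset

theorem starForest_incident_some_subset (i : ι) :
    {e ∈ (starForest ι κ).edgeSet | ∃ v ∈ e, starForestBlock v = some i} ⊆
      Set.range fun j : κ => s((i, none), (i, some j)) := by
  rintro e ⟨he, v, hv, hvi⟩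
  obtain ⟨⟨i', j⟩, rfl⟩ := starForest_edgeSet_subset he
  rcases Sym2.mem_iff.1 hv with rfl | rfl
  · simp [starForestBlock] at hvi
  · obtain rfl : i' = i := Option.some_injective _ hvi
    exact ⟨j, rfl⟩

theorem starForest_not_exists_independent_transversal :
    ¬∃ T : Option ι → ι × Option κ, (∀ b, starForestBlock (T b) = b) ∧
      ∀ b b', ¬(starForest ι κ).Adj (T b) (T b') := by
  rintro ⟨T, hT, hind⟩
  obtain ⟨i, hi⟩ : ∃ i, T none = (i, none) := by
    rcases h : T none with ⟨i, _ | j⟩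
    · exact ⟨i, rfl⟩
    · simpa [h, starForestBlock] using hT none
  obtain ⟨j, hj⟩ : ∃ j, T (some i) = (i, some j) := by
    rcases h : T (some i) with ⟨i', _ | j⟩
    · simpa [h, starForestBlock] using hT (some i)
    · obtain rfl : i' = i := by simpa [h, starForestBlock] using hT (some i)
      exact ⟨j, rfl⟩
  refine hind none (some i) ?_
  rw [hi, hj, starForest, fromEdgeSet_adj]
  exact ⟨⟨(i, j), rfl⟩, by simp⟩

theorem starForest_ncard_incident_le [Finite ι] [Finite κ] {β : ℝ}
    (hκι : Nat.card κ ≤ β * Nat.card ι) (hβκ : 1 ≤ β * Nat.card κ) (b : Option ι) :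
    ({e ∈ (starForest ι κ).edgeSet | ∃ v ∈ e, starForestBlock v = b}.ncard : ℝ) ≤
      β * ((starForestBlock ⁻¹' {b} : Set (ι × Option κ)).ncard : ℝ) ^ 2 := by
  cases b with
  | none =>
    have hle : {e ∈ (starForest ι κ).edgeSet | ∃ v ∈ e, starForestBlock v = none}.ncard ≤
        Nat.card ι * Nat.card κ := by
      rw [← Nat.card_prod]
      exact (Set.ncard_le_ncard (Set.sep_subset _ _ |>.trans starForest_edgeSet_subset)
        (Set.finite_range _)).trans (Set.ncard_range_le _)
    rw [ncard_starForestBlock_preimage_none]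
    calc _ ≤ (Nat.card ι * Nat.card κ : ℝ) := by exact_mod_cast hle
      _ ≤ Nat.card ι * (β * Nat.card ι) := by gcongr
      _ = _ := by ring
  | some i =>
    have hle : {e ∈ (starForest ι κ).edgeSet | ∃ v ∈ e, starForestBlock v = some i}.ncard ≤
        Nat.card κ :=
      (Set.ncard_le_ncard (starForest_incident_some_subset i) (Set.finite_range _)).trans
        (Set.ncard_range_le _)
    rw [ncard_starForestBlock_preimage_some]
    calc _ ≤ (Nat.card κ : ℝ) := by exact_mod_cast hle
      _ ≤ Nat.card κ * (β * Nat.card κ) := le_mul_of_one_le_right (by positivity) hβκ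
      _ = _ := by ring

/-- For every `β > 0` there is a graph `G` with a vertex partition (fibers of a
surjective `f : V → ι`) such that every block `B` is incident with at most `β·|B|²`
edges, yet there is no independent transversal. -/
theorem stmt_11 (β : ℝ) (hβ : 0 < β) :
    ∃ (V ι : Type) (_ : Fintype V) (_ : Fintype ι) (G : SimpleGraph V) (f : V → ι),
      Function.Surjective f ∧
      (∀ i : ι,
        ({e ∈ G.edgeSet | ∃ v ∈ e, f v = i}.ncard : ℝ) ≤ β * ((f ⁻¹' {i}).ncard : ℝ) ^ 2) ∧
      ¬∃ T : ι → V, (∀ i, f (T i) = i) ∧ ∀ i j, ¬G.Adj (T i) (T j) := by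
  obtain ⟨k, hk⟩ := exists_nat_gt β⁻¹
  have hβk : 1 ≤ β * k := by
    rw [mul_comm]
    exact ((inv_lt_iff_one_lt_mul₀ hβ).1 hk).le
  have hk0 : 0 < k := by exact_mod_cast (inv_pos.2 hβ).trans hk
  have : NeZero k := ⟨hk0.ne'⟩
  have : NeZero (k * k) := ⟨(Nat.mul_pos hk0 hk0).ne'⟩
  refine ⟨Fin (k * k) × Option (Fin k), Option (Fin (k * k)), inferInstance, inferInstance,
    starForest _ _, starForestBlock, starForestBlock_surjective,
    starForest_ncard_incident_le ?_ (by simpa using hβk),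
    starForest_not_exists_independent_transversal⟩
  simp only [Nat.card_eq_fintype_card, Fintype.card_fin, Nat.cast_mul]
  calc (k : ℝ) = k * 1 := (mul_one _).symm
    _ ≤ k * (β * k) := by gcongr
    _ = β * (k * k) := by ring
end
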